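/- arXiv:math/9806111 — 4 statements merged into one kernel-verified Lean document; each statement's English description precedes it below -/
import Mathlib

section
/- Let R be a commutative ring, N an R-module, and F a module over the trivial square-zero extension R⋉N which is flat over R⋉N. Set E = F ⊗_{R⋉N} R = F/((0⊕N)·F), an R-module. Then the map E ⊗[R] N → F sending (x mod (0⊕N)·F) ⊗ n to (0,n)·x is a well-defined, injective R-linear map whose image is exactly the kernel of the quotient map F → E; in other words, tensoring F with the short exact sequence 0 → N → R⋉N → R → 0 yields a short exact sequence 0 → E ⊗[R] N → F → E → 0. -/
open TensorProduct

/-!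
Write `I = 0 ⊕ N` for the kernel of `R⋉N → R`. Tensoring the inclusion `I → R⋉N` with the flat
module `F` shows that multiplication `I ⊗_{R⋉N} F → F` is injective, with image `I • F`.
Since `I² = 0`, the map `I ⊗_{R⋉N} F → (F/IF) ⊗_R N`, `i ⊗ x ↦ x̄ ⊗ snd i`, is well defined; it is
surjective, and composing it with `x̄ ⊗ n ↦ (0, n) • x` gives back the multiplication map. Hence the
latter map is injective with image `I • F`.
-/

namespace TrivSqZeroExt

section Semiring

variable {R N : Type*} [CommSemiring R] [AddCommMonoid N] [Module R N] [Module Rᵐᵒᵖ N]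
  [IsCentralScalar R N]

theorem inr_mem_kerIdeal (n : N) : (inr n : TrivSqZeroExt R N) ∈ kerIdeal R N :=
  RingHom.mem_ker.2 (fst_inr R n)

theorem inr_smul_eq_zero_of_mem_kerIdeal_smul_top {F : Type*} [AddCommMonoid F]
    [Module (TrivSqZeroExt R N) F] (n : N) {x : F}
    (hx : x ∈ kerIdeal R N • (⊤ : Submodule (TrivSqZeroExt R N) F)) :
    (inr n : TrivSqZeroExt R N) • x = 0 := by
  have h := Submodule.smul_mem_smul (inr_mem_kerIdeal n) hx
  rwa [← Submodule.mul_smul, ← pow_two, kerIdeal_sq, Submodule.bot_smul,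
    Submodule.mem_bot] at h

end Semiring

variable {R N F : Type*} [CommRing R] [AddCommGroup N] [Module R N] [Module Rᵐᵒᵖ N]
  [IsCentralScalar R N] [AddCommGroup F] [Module (TrivSqZeroExt R N) F]

theorem inr_smul_quotient_eq_zero (n : N)
    (e : F ⧸ kerIdeal R N • (⊤ : Submodule (TrivSqZeroExt R N) F)) :
    (inr n : TrivSqZeroExt R N) • e = 0 := by
  obtain ⟨x, rfl⟩ := Submodule.Quotient.mk_surjective _ e
  exact (Submodule.Quotient.mk_eq_zero _).2
    (Submodule.smul_mem_smul (inr_mem_kerIdeal n) Submodule.mem_top)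

variable [Module R F] [IsScalarTower R (TrivSqZeroExt R N) F]

theorem smul_eq_fst_smul (a : TrivSqZeroExt R N)
    (e : F ⧸ kerIdeal R N • (⊤ : Submodule (TrivSqZeroExt R N) F)) : a • e = a.fst • e := by
  conv_lhs => rw [← inl_fst_add_inr_snd_eq a]
  rw [add_smul, inr_smul_quotient_eq_zero, add_zero, ← algebraMap_eq_inl, algebraMap_smul]

variable (R N F)

noncomputable def inrSMul :
    (F ⧸ kerIdeal R N • (⊤ : Submodule (TrivSqZeroExt R N) F)) ⊗[R] N →ₗ[TrivSqZeroExt R N] F :=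
  AlgebraTensorModule.lift <| Submodule.liftQ _
    (LinearMap.mk₂' (TrivSqZeroExt R N) R (fun x n => (inr n : TrivSqZeroExt R N) • x)
      (fun _ _ _ => smul_add _ _ _) (fun _ _ _ => smul_comm _ _ _)
      (fun _ _ _ => by rw [inr_add, add_smul])
      (fun r n x => by rw [inr_smul, smul_assoc]))
    fun x hx => LinearMap.ext fun n => inr_smul_eq_zero_of_mem_kerIdeal_smul_top n hx

@[simp]
theorem inrSMul_tmul (x : F) (n : N) :
    inrSMul R N F (Submodule.Quotient.mk x ⊗ₜ n) = (inr n : TrivSqZeroExt R N) • x :=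
  rfl

noncomputable def kerIdealTensorToQuotTensor :
    kerIdeal R N ⊗[TrivSqZeroExt R N] F →ₗ[TrivSqZeroExt R N]
      (F ⧸ kerIdeal R N • (⊤ : Submodule (TrivSqZeroExt R N) F)) ⊗[R] N :=
  TensorProduct.lift <| LinearMap.mk₂ (TrivSqZeroExt R N)
    (fun i x => Submodule.Quotient.mk x ⊗ₜ (i : TrivSqZeroExt R N).snd)
    (fun i j x => by simp [tmul_add])
    -- `snd (a * i) = fst a • snd i` as `fst i = 0`, and `a` acts on `F/IF` through `fst a`
    (fun a i x => by
      have hi : (i : TrivSqZeroExt R N).fst = 0 := i.2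
      simp [snd_mul, hi, smul_tmul', smul_eq_fst_smul])
    (fun i x y => by simp [add_tmul])
    (fun a i x => by rw [Submodule.Quotient.mk_smul, smul_tmul'])

@[simp]
theorem kerIdealTensorToQuotTensor_tmul (i : kerIdeal R N) (x : F) :
    kerIdealTensorToQuotTensor R N F (i ⊗ₜ x) =
      Submodule.Quotient.mk x ⊗ₜ (i : TrivSqZeroExt R N).snd :=
  rfl

theorem kerIdealTensorToQuotTensor_surjective :
    Function.Surjective (kerIdealTensorToQuotTensor R N F) := by
  intro t
  induction t using TensorProduct.induction_on with
  | zero => exact ⟨0, map_zero _⟩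
  | tmul y n =>
    obtain ⟨x, rfl⟩ := Submodule.Quotient.mk_surjective _ y
    exact ⟨⟨inr n, inr_mem_kerIdeal n⟩ ⊗ₜ x, by simp⟩
  | add _ _ hs ht =>
    obtain ⟨s, rfl⟩ := hs
    obtain ⟨t, rfl⟩ := ht
    exact ⟨s + t, map_add _ _ _⟩

theorem inrSMul_comp_kerIdealTensorToQuotTensor :
    inrSMul R N F ∘ₗ kerIdealTensorToQuotTensor R N F =
      (TensorProduct.lid (TrivSqZeroExt R N) F).toLinearMap ∘ₗ (kerIdeal R N).subtype.rTensor F := by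
  refine TensorProduct.ext' fun i x => ?_
  simp only [LinearMap.comp_apply, kerIdealTensorToQuotTensor_tmul, inrSMul_tmul,
    LinearMap.rTensor_tmul, Submodule.subtype_apply, LinearEquiv.coe_coe, TensorProduct.lid_tmul]
  rw [← (mem_kerIdeal_iff_inr R N _).1 i.2]

theorem inrSMul_injective [Module.Flat (TrivSqZeroExt R N) F] :
    Function.Injective (inrSMul R N F) := by
  refine Function.Injective.of_comp_right ?_ (kerIdealTensorToQuotTensor_surjective R N F)
  rw [← LinearMap.coe_comp, inrSMul_comp_kerIdealTensorToQuotTensor, LinearMap.coe_comp]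
  exact (TensorProduct.lid _ F).injective.comp
    (Module.Flat.rTensor_preserves_injective_linearMap _ (kerIdeal R N).injective_subtype)

theorem range_inrSMul :
    LinearMap.range (inrSMul R N F) = kerIdeal R N • ⊤ := by
  rw [← LinearMap.range_comp_of_range_eq_top _
      (LinearMap.range_eq_top.2 (kerIdealTensorToQuotTensor_surjective R N F)),
    inrSMul_comp_kerIdealTensorToQuotTensor, LinearMap.range_comp,
    Submodule.map_range_rTensor_subtype_lid]

end TrivSqZeroExt

/-- Let `R` be a commutative ring, `N` an `R`-module, and `F` a module over the trivial
square-zero extension `R⋉N` which is flat over `R⋉N`.  Set `E = F ⊗_{R⋉N} R = F/((0⊕N)·F)`.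
Then the map `E ⊗[R] N → F` sending `(x mod (0⊕N)·F) ⊗ n` to `(0,n)·x` is a well-defined,
injective `R`-linear map whose image is exactly the kernel of the quotient map `F → E`;
i.e. tensoring `F` with `0 → N → R⋉N → R → 0` yields `0 → E ⊗[R] N → F → E → 0`. -/
theorem flat_deformation_gives_extension
    (R : Type) [CommRing R] (N : Type) [AddCommGroup N] [Module R N]
    (F : Type) [AddCommGroup F] :
    letI : Module Rᵐᵒᵖ N := Module.compHom N ((RingHom.id R).fromOpposite mul_comm)
    haveI : IsCentralScalar R N := ⟨fun _ _ => rfl⟩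
    ∀ [instF : Module (TrivSqZeroExt R N) F] [Module.Flat (TrivSqZeroExt R N) F],
      -- `F` and its quotients are regarded as `R`-modules by restriction of scalars
      -- along the inclusion `R → R⋉N`.
      letI : Module R F := Module.compHom F (algebraMap R (TrivSqZeroExt R N))
      haveI : IsScalarTower R (TrivSqZeroExt R N) F :=
        ⟨fun x y z => by rw [Algebra.smul_def, mul_smul]; rfl⟩
      -- the ideal `0 ⊕ N` of `R⋉N`:
      ∀ (K : Submodule (TrivSqZeroExt R N) F),
        K = RingHom.ker (TrivSqZeroExt.fstHom R R N) • (⊤ : Submodule (TrivSqZeroExt R N) F) →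
        letI : Module R (F ⧸ K) :=
          Module.compHom (F ⧸ K) (algebraMap R (TrivSqZeroExt R N))
        ∃ g : ((F ⧸ K) ⊗[R] N) →ₗ[R] F,
          (∀ (x : F) (n : N),
              g ((Submodule.Quotient.mk x : F ⧸ K) ⊗ₜ[R] n) =
                (TrivSqZeroExt.inr n : TrivSqZeroExt R N) • x) ∧
          Function.Injective g ∧
          LinearMap.range g = Submodule.restrictScalars R K := by
  intro _ _ K hK
  subst hK
  let : Module Rᵐᵒᵖ N := Module.compHom N ((RingHom.id R).fromOpposite mul_comm)
  have : IsCentralScalar R N := ⟨fun _ _ => rfl⟩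
  let : Module R F := Module.compHom F (algebraMap R (TrivSqZeroExt R N))
  have : IsScalarTower R (TrivSqZeroExt R N) F :=
    ⟨fun x y z => by rw [Algebra.smul_def, mul_smul]; rfl⟩
  exact ⟨(TrivSqZeroExt.inrSMul R N F).restrictScalars R, TrivSqZeroExt.inrSMul_tmul R N F,
    TrivSqZeroExt.inrSMul_injective R N F,
    congrArg (Submodule.restrictScalars R) (TrivSqZeroExt.range_inrSMul R N F)⟩
end

section
/- Let R be a commutative ring, N an R-module, E a flat R-module, and 0 → E ⊗[R] N →ι F →π E → 0 a short exact sequence of R-modules. Then the formula (r,n) • x = r·x + ι(π(x) ⊗ n) defines an (R⋉N)-module structure on F extending its R-module structure, and with this structure F is flat over R⋉N and F ⊗_{R⋉N} R is isomorphic to E as an R-module (via the map induced by π). -/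
set_option maxHeartbeats 2000000
set_option synthInstance.maxHeartbeats 1000000

open TensorProduct TrivSqZeroExt

section Defs


variable {R : Type} [CommRing R] {N : Type} [AddCommGroup N] [Module R N]
  [Module Rᵐᵒᵖ N] [IsCentralScalar R N]
  {E : Type} [AddCommGroup E] [Module R E]
  {F : Type} [AddCommGroup F] [Module R F]
  (ι : (E ⊗[R] N) →ₗ[R] F) (π : F →ₗ[R] E)

/-- The module structure `(r,n) • x = r • x + ι (π x ⊗ n)`. -/
noncomputable def deformModule (h0 : ∀ y, π (ι y) = 0) : Module (TrivSqZeroExt R N) F where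
  smul a x := a.fst • x + ι (π x ⊗ₜ[R] a.snd)
  one_smul x := by
    show (1 : TrivSqZeroExt R N).fst • x + ι (π x ⊗ₜ[R] (1 : TrivSqZeroExt R N).snd) = x
    simp
  mul_smul a b x := by
    show (a*b).fst • x + ι (π x ⊗ₜ[R] (a*b).snd)
        = a.fst • (b.fst • x + ι (π x ⊗ₜ[R] b.snd))
          + ι (π (b.fst • x + ι (π x ⊗ₜ[R] b.snd)) ⊗ₜ[R] a.snd)
    rw [map_add, map_smul, h0, add_zero, fst_mul, snd_mul, op_smul_eq_smul]
    rw [tmul_add, map_add, mul_smul]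
    simp only [tmul_smul, ← smul_tmul', map_smul, smul_add]
    abel
  smul_zero a := by
    show a.fst • (0:F) + ι (π 0 ⊗ₜ[R] a.snd) = 0
    simp
  smul_add a x y := by
    show a.fst • (x + y) + ι (π (x+y) ⊗ₜ[R] a.snd) = _
    rw [map_add, add_tmul, map_add, smul_add]
    show _ = (a.fst • x + ι (π x ⊗ₜ[R] a.snd)) + (a.fst • y + ι (π y ⊗ₜ[R] a.snd))
    abel
  add_smul a b x := by
    show (a+b).fst • x + ι (π x ⊗ₜ[R] (a+b).snd)
        = (a.fst • x + ι (π x ⊗ₜ[R] a.snd)) + (b.fst • x + ι (π x ⊗ₜ[R] b.snd))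
    rw [fst_add, snd_add, add_smul, tmul_add, map_add]
    abel
  zero_smul x := by
    show (0 : TrivSqZeroExt R N).fst • x + ι (π x ⊗ₜ[R] (0 : TrivSqZeroExt R N).snd) = 0
    simp

end Defs

theorem descend_aux {R G E F M T : Type} [CommRing R] [AddCommGroup G] [Module R G]
    [AddCommGroup E] [Module R E] [AddCommGroup F] [Module R F]
    [AddCommGroup M] [Module R M] [AddCommGroup T] [Module R T]
    (ι : G →ₗ[R] F) (π : F →ₗ[R] E)
    (hπ : Function.Surjective π) (hexact : LinearMap.range ι = LinearMap.ker π)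
    (φ : M ⊗[R] F →ₗ[R] T) (hφ : ∀ (m : M) (y : G), φ (m ⊗ₜ[R] ι y) = 0) :
    ∃ ψ : M ⊗[R] E →ₗ[R] T, ∀ w : M ⊗[R] F, ψ (LinearMap.lTensor M π w) = φ w := by
  have hex : Function.Exact ι π := LinearMap.exact_iff.mpr hexact.symm
  have hu : Function.Surjective (LinearMap.lTensor M π) := LinearMap.lTensor_surjective M hπ
  have hexT : Function.Exact (LinearMap.lTensor M ι) (LinearMap.lTensor M π) :=
    lTensor_exact M hex hπ
  have hz : ∀ z : M ⊗[R] G, φ (LinearMap.lTensor M ι z) = 0 := by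
    intro z
    induction z using TensorProduct.induction_on with
    | zero => simp
    | tmul m y => simpa using hφ m y
    | add z₁ z₂ h₁ h₂ => rw [map_add, map_add, h₁, h₂, add_zero]
  have hker : LinearMap.ker (LinearMap.lTensor M π) ≤ LinearMap.ker φ := by
    intro w hw
    rw [LinearMap.mem_ker] at hw ⊢
    obtain ⟨z, rfl⟩ := (hexT w).mp hw
    exact hz z
  set u := LinearMap.lTensor M π with hu'
  let eqv := u.quotKerEquivOfSurjective hu
  have heqv : ∀ w, eqv (Submodule.Quotient.mk w) = u w := by
    intro w
    simp [eqv, LinearMap.quotKerEquivOfSurjective, LinearMap.quotKerEquivRange_apply_mk]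
  refine ⟨(Submodule.liftQ _ φ hker).comp (eqv.symm : M ⊗[R] E →ₗ[R] _), fun w => ?_⟩
  have h1 : eqv.symm (u w) = Submodule.Quotient.mk w := by
    apply eqv.injective; rw [LinearEquiv.apply_symm_apply, heqv]
  rw [LinearMap.comp_apply]
  erw [h1]
  simp [Submodule.liftQ_apply]

theorem flat_aux {R N E F : Type} [CommRing R] [AddCommGroup N] [Module R N]
    [Module Rᵐᵒᵖ N] [IsCentralScalar R N]
    [AddCommGroup E] [Module R E] [Module.Flat R E] [AddCommGroup F] [Module R F]
    (ι : (E ⊗[R] N) →ₗ[R] F) (π : F →ₗ[R] E)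
    (hι : Function.Injective ι)
    (hπ : Function.Surjective π) (hexact : LinearMap.range ι = LinearMap.ker π)
    [inst : Module (TrivSqZeroExt R N) F]
    (hsmul : ∀ (a : TrivSqZeroExt R N) (x : F), a • x = a.fst • x + ι (π x ⊗ₜ[R] a.snd)) :
    Module.Flat (TrivSqZeroExt R N) F := by
  have hπι : ∀ y, π (ι y) = 0 := by
    intro y
    have : ι y ∈ LinearMap.range ι := ⟨y, rfl⟩
    rw [hexact, LinearMap.mem_ker] at this
    exact this
  have hinl : ∀ (r : R) (x : F), (inl r : TrivSqZeroExt R N) • x = r • x := by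
    intro r x; rw [hsmul]; simp
  have hinr : ∀ (n : N) (x : F), (inr n : TrivSqZeroExt R N) • x = ι (π x ⊗ₜ[R] n) := by
    intro n x; rw [hsmul]; simp
  have hπs : ∀ (a : TrivSqZeroExt R N) (x : F), π (a • x) = a.fst • π x := by
    intro a x; rw [hsmul, map_add, map_smul, hπι, add_zero]
  rw [Module.Flat.iff_rTensor_injective']
  intro I
  -- instances transporting R-modules to (TrivSqZeroExt R N)-modules via fst
  letI mE : Module (TrivSqZeroExt R N) E := Module.compHom E (fstHom R R N).toRingHom
  set I1 : Ideal R := I.map (fstHom R R N).toRingHom with hI1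
  letI mI1 : Module (TrivSqZeroExt R N) I1 := Module.compHom I1 (fstHom R R N).toRingHom
  letI mI1E : Module (TrivSqZeroExt R N) (I1 ⊗[R] E) :=
    Module.compHom (I1 ⊗[R] E) (fstHom R R N).toRingHom
  -- the submodule I₀ of N
  let I0 : Submodule R N :=
    { carrier := {n | (inr n : TrivSqZeroExt R N) ∈ I}
      add_mem' := fun {a} {b} ha hb => by
        show (inr (a + b) : TrivSqZeroExt R N) ∈ I
        rw [inr_add]
        exact I.add_mem ha hb
      zero_mem' := by
        show (inr 0 : TrivSqZeroExt R N) ∈ I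
        rw [inr_zero]
        exact I.zero_mem
      smul_mem' := fun r n hn => by
        show (inr (r • n) : TrivSqZeroExt R N) ∈ I
        rw [← inl_mul_inr]
        exact I.mul_mem_left _ hn }
  have hI0 : ∀ n : N, n ∈ I0 ↔ (inr n : TrivSqZeroExt R N) ∈ I := fun n => Iff.rfl
  letI mI0E : Module (TrivSqZeroExt R N) (I0 ⊗[R] E) :=
    Module.compHom (I0 ⊗[R] E) (fstHom R R N).toRingHom
  have hfstsurj : Function.Surjective (fstHom R R N).toRingHom := fun r => ⟨inl r, rfl⟩
  -- the projection I → I1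
  let gI : I →ₗ[TrivSqZeroExt R N] I1 :=
    { toFun := fun i => ⟨((i : TrivSqZeroExt R N)).fst, Ideal.mem_map_of_mem _ i.2⟩
      map_add' := fun i j => Subtype.ext (by
        show ((i : TrivSqZeroExt R N) + (j : TrivSqZeroExt R N)).fst = _
        rw [fst_add]; rfl)
      map_smul' := fun a i => Subtype.ext (by
        show (a * (i : TrivSqZeroExt R N)).fst = a.fst • ((i : TrivSqZeroExt R N)).fst
        rw [fst_mul, smul_eq_mul]) }
  have hgsurj : Function.Surjective gI := by
    rintro ⟨r, hr⟩
    obtain ⟨a, haI, rfl⟩ := (Ideal.mem_map_iff_of_surjective _ hfstsurj).mp hr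
    exact ⟨⟨a, haI⟩, rfl⟩
  set K' : Submodule (TrivSqZeroExt R N) I := LinearMap.ker gI with hK'
  have hK'fst : ∀ k : K', ((k : I) : TrivSqZeroExt R N).fst = 0 :=
    fun k => Subtype.ext_iff.mp k.2
  have hexK : Function.Exact (K'.subtype) gI := gI.exact_subtype_ker_map
  have hexT : Function.Exact (LinearMap.rTensor F (K'.subtype)) (LinearMap.rTensor F gI) :=
    rTensor_exact F hexK hgsurj
  -- the comparison map θ : I1 ⊗[A] F → I1 ⊗[R] E
  let θ : (I1 ⊗[TrivSqZeroExt R N] F) →ₗ[TrivSqZeroExt R N] (I1 ⊗[R] E) :=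
    TensorProduct.lift (LinearMap.mk₂ (TrivSqZeroExt R N) (fun i1 x => i1 ⊗ₜ[R] π x)
      (fun i1 i2 x => by rw [add_tmul])
      (fun a i1 x => by
        show ((fstHom R R N a) • i1) ⊗ₜ[R] π x = (fstHom R R N a) • (i1 ⊗ₜ[R] π x)
        rw [smul_tmul'])
      (fun i1 x y => by rw [map_add, tmul_add])
      (fun a i1 x => by
        show i1 ⊗ₜ[R] π (a • x) = (fstHom R R N a) • (i1 ⊗ₜ[R] π x)
        rw [hπs, tmul_smul]; rfl))
  letI mT1 : Module R (I1 ⊗[TrivSqZeroExt R N] F) :=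
    Module.compHom _ (algebraMap R (TrivSqZeroExt R N))
  have halg : ∀ r : R, algebraMap R (TrivSqZeroExt R N) r = inl r := fun r => rfl
  -- the map φθ : I1 ⊗[R] F → I1 ⊗[A] F
  let φθ : (I1 ⊗[R] F) →ₗ[R] (I1 ⊗[TrivSqZeroExt R N] F) :=
    TensorProduct.lift (LinearMap.mk₂ R (fun i1 x => i1 ⊗ₜ[TrivSqZeroExt R N] x)
      (fun i1 i2 x => by rw [add_tmul])
      (fun r i1 x => by
        show (r • i1) ⊗ₜ[TrivSqZeroExt R N] x
            = (algebraMap R (TrivSqZeroExt R N) r) • (i1 ⊗ₜ[TrivSqZeroExt R N] x)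
        rw [smul_tmul']
        rfl)
      (fun i1 x y => by rw [tmul_add])
      (fun r i1 x => by
        show i1 ⊗ₜ[TrivSqZeroExt R N] (r • x)
            = (algebraMap R (TrivSqZeroExt R N) r) • (i1 ⊗ₜ[TrivSqZeroExt R N] x)
        rw [halg, ← hinl r x, tmul_smul]))
  have hφθ : ∀ (m : I1) (y : E ⊗[R] N), φθ (m ⊗ₜ[R] ι y) = 0 := by
    intro m y
    induction y using TensorProduct.induction_on with
    | zero => rw [map_zero, tmul_zero, map_zero]
    | tmul e n =>
      obtain ⟨x', hx'⟩ := hπ e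
      have h1 : ι (e ⊗ₜ[R] n) = (inr n : TrivSqZeroExt R N) • x' := by rw [hinr, hx']
      have h2 : φθ (m ⊗ₜ[R] ι (e ⊗ₜ[R] n)) = m ⊗ₜ[TrivSqZeroExt R N] (ι (e ⊗ₜ[R] n)) := rfl
      rw [h2, h1, tmul_smul, smul_tmul']
      have h3 : ((inr n : TrivSqZeroExt R N) • m : I1) = 0 := Subtype.ext (by
        show (fstHom R R N (inr n)) • (m : R) = 0
        simp)
      rw [h3, zero_tmul]
    | add y z hy hz =>
      rw [map_add, tmul_add, map_add, hy, hz, add_zero]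
  obtain ⟨ψθ, hψθ⟩ := descend_aux ι π hπ hexact φθ hφθ
  have θLI : ∀ s : I1 ⊗[TrivSqZeroExt R N] F, ψθ (θ s) = s := by
    intro s
    induction s using TensorProduct.induction_on with
    | zero => rw [map_zero, map_zero]
    | tmul i1 x =>
      have h1 : θ (i1 ⊗ₜ[TrivSqZeroExt R N] x) = i1 ⊗ₜ[R] π x := rfl
      have h2 : i1 ⊗ₜ[R] π x = LinearMap.lTensor I1 π (i1 ⊗ₜ[R] x) := rfl
      rw [h1, h2, hψθ]
      rfl
    | add y z hy hz => rw [map_add, map_add, hy, hz]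
  have θinj : Function.Injective θ := Function.LeftInverse.injective θLI
  -- the comparison map d : K' ⊗[A] F → I0 ⊗[R] E
  have hmem : ∀ k : K', ((k : I) : TrivSqZeroExt R N).snd ∈ I0 := by
    intro k
    show (inr (((k : I) : TrivSqZeroExt R N).snd) : TrivSqZeroExt R N) ∈ I
    have : (inr (((k : I) : TrivSqZeroExt R N).snd) : TrivSqZeroExt R N)
        = ((k : I) : TrivSqZeroExt R N) := TrivSqZeroExt.ext ((hK'fst k).symm) rfl
    rw [this]
    exact (k : I).2
  let d : (K' ⊗[TrivSqZeroExt R N] F) →ₗ[TrivSqZeroExt R N] (I0 ⊗[R] E) :=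
    TensorProduct.lift (LinearMap.mk₂ (TrivSqZeroExt R N)
      (fun k x => (⟨((k : I) : TrivSqZeroExt R N).snd, hmem k⟩ : I0) ⊗ₜ[R] π x)
      (fun k1 k2 x => by
        rw [← add_tmul]
        rfl)
      (fun a k x => by
        have h4 : ((((a • k : K') : I) : TrivSqZeroExt R N)).snd
            = a.fst • (((k : I) : TrivSqZeroExt R N)).snd := by
          show (a * ((k : I) : TrivSqZeroExt R N)).snd = _
          rw [snd_mul, op_smul_eq_smul, hK'fst, zero_smul, add_zero]
        show (⟨_, _⟩ : I0) ⊗ₜ[R] π x = (fstHom R R N a) • _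
        rw [smul_tmul']
        congr 1
        exact Subtype.ext h4)
      (fun k x y => by rw [map_add, tmul_add])
      (fun a k x => by
        show _ ⊗ₜ[R] π (a • x) = (fstHom R R N a) • _
        rw [hπs, tmul_smul]; rfl))
  letI mT0 : Module R (K' ⊗[TrivSqZeroExt R N] F) :=
    Module.compHom _ (algebraMap R (TrivSqZeroExt R N))
  have hkerg : ∀ n : I0, (⟨inr (n : N), (hI0 n).mp n.2⟩ : I) ∈ K' := by
    intro n
    show gI ⟨inr (n : N), _⟩ = 0
    apply Subtype.ext
    show (inr (n : N) : TrivSqZeroExt R N).fst = 0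
    rw [fst_inr]
  let kOf : I0 → K' := fun n => ⟨⟨inr (n : N), (hI0 n).mp n.2⟩, hkerg n⟩
  let φd : (I0 ⊗[R] F) →ₗ[R] (K' ⊗[TrivSqZeroExt R N] F) :=
    TensorProduct.lift (LinearMap.mk₂ R (fun n x => kOf n ⊗ₜ[TrivSqZeroExt R N] x)
      (fun n1 n2 x => by
        rw [← add_tmul]
        congr 1
        apply Subtype.ext
        apply Subtype.ext
        show (inr ((n1 : N) + (n2 : N)) : TrivSqZeroExt R N) = inr (n1 : N) + inr (n2 : N)
        rw [inr_add])
      (fun r n x => by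
        show kOf (r • n) ⊗ₜ[TrivSqZeroExt R N] x
            = (algebraMap R (TrivSqZeroExt R N) r) • (kOf n ⊗ₜ[TrivSqZeroExt R N] x)
        rw [smul_tmul']
        congr 1
        apply Subtype.ext
        apply Subtype.ext
        show (inr (r • (n : N)) : TrivSqZeroExt R N) = inl r * inr (n : N)
        rw [inl_mul_inr])
      (fun n x y => by rw [tmul_add])
      (fun r n x => by
        show kOf n ⊗ₜ[TrivSqZeroExt R N] (r • x)
            = (algebraMap R (TrivSqZeroExt R N) r) • (kOf n ⊗ₜ[TrivSqZeroExt R N] x)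
        rw [halg, ← hinl r x, tmul_smul]))
  have hφd : ∀ (n : I0) (y : E ⊗[R] N), φd (n ⊗ₜ[R] ι y) = 0 := by
    intro n y
    induction y using TensorProduct.induction_on with
    | zero => rw [map_zero, tmul_zero, map_zero]
    | tmul e m =>
      obtain ⟨x', hx'⟩ := hπ e
      have h1 : ι (e ⊗ₜ[R] m) = (inr m : TrivSqZeroExt R N) • x' := by rw [hinr, hx']
      have h2 : φd (n ⊗ₜ[R] ι (e ⊗ₜ[R] m)) = kOf n ⊗ₜ[TrivSqZeroExt R N] (ι (e ⊗ₜ[R] m)) := rfl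
      rw [h2, h1, tmul_smul, smul_tmul']
      have h3 : ((inr m : TrivSqZeroExt R N) • kOf n : K') = 0 := by
        apply Subtype.ext
        apply Subtype.ext
        show (inr m : TrivSqZeroExt R N) * inr (n : N) = 0
        rw [inr_mul_inr]
      rw [h3, zero_tmul]
    | add y z hy hz =>
      rw [map_add, tmul_add, map_add, hy, hz, add_zero]
  obtain ⟨ψd, hψd⟩ := descend_aux (M := I0) (T := K' ⊗[TrivSqZeroExt R N] F) ι π hπ hexact φd hφd
  have dLI : ∀ s : K' ⊗[TrivSqZeroExt R N] F, ψd (d s) = s := by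
    intro s
    induction s using TensorProduct.induction_on with
    | zero => rw [map_zero, map_zero]
    | tmul k x =>
      have h1 : d (k ⊗ₜ[TrivSqZeroExt R N] x)
          = (⟨((k : I) : TrivSqZeroExt R N).snd, hmem k⟩ : I0) ⊗ₜ[R] π x := rfl
      have h2 : (⟨((k : I) : TrivSqZeroExt R N).snd, hmem k⟩ : I0) ⊗ₜ[R] π x
          = LinearMap.lTensor I0 π ((⟨((k : I) : TrivSqZeroExt R N).snd, hmem k⟩ : I0) ⊗ₜ[R] x) :=
        rfl
      rw [h1, h2, hψd]
      show kOf ⟨((k : I) : TrivSqZeroExt R N).snd, hmem k⟩ ⊗ₜ[TrivSqZeroExt R N] x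
          = k ⊗ₜ[TrivSqZeroExt R N] x
      congr 1
      apply Subtype.ext
      apply Subtype.ext
      show (inr (((k : I) : TrivSqZeroExt R N).snd) : TrivSqZeroExt R N) = _
      exact TrivSqZeroExt.ext ((hK'fst k).symm) rfl
    | add y z hy hz => rw [map_add, map_add, hy, hz]
  have dinj : Function.Injective d := Function.LeftInverse.injective dLI
  -- flatness of E
  have hβ : Function.Injective (LinearMap.rTensor E I1.subtype) :=
    (Module.Flat.iff_rTensor_injective' (R := R) (M := E)).mp inferInstance I1
  have hγ : Function.Injective (LinearMap.rTensor E I0.subtype) :=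
    Module.Flat.rTensor_preserves_injective_linearMap I0.subtype (Submodule.injective_subtype I0)
  -- the chase
  rw [injective_iff_map_eq_zero]
  intro t ht
  have key1 : ∀ s : I ⊗[TrivSqZeroExt R N] F,
      (TensorProduct.lid R E) (LinearMap.rTensor E I1.subtype (θ (LinearMap.rTensor F gI s)))
        = π ((TensorProduct.lid (TrivSqZeroExt R N) F)
            (LinearMap.rTensor F I.subtype s)) := by
    intro s
    induction s using TensorProduct.induction_on with
    | zero => simp only [map_zero]
    | tmul i x =>
      show (TensorProduct.lid R E) (((i : TrivSqZeroExt R N).fst : R) ⊗ₜ[R] π x)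
          = π ((i : TrivSqZeroExt R N) • x)
      rw [hπs]
      simp
    | add y z hy hz => simp only [map_add, hy, hz]
  have h5 : LinearMap.rTensor F gI t = 0 := by
    apply θinj
    rw [map_zero]
    apply hβ
    rw [map_zero]
    apply (TensorProduct.lid R E).injective
    rw [map_zero, key1, ht, map_zero, map_zero]
  obtain ⟨s, hs⟩ := (hexT t).mp h5
  have key2 : ∀ s : K' ⊗[TrivSqZeroExt R N] F,
      ι ((TensorProduct.comm R N E) (LinearMap.rTensor E I0.subtype (d s)))
        = (TensorProduct.lid (TrivSqZeroExt R N) F)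
            (LinearMap.rTensor F I.subtype (LinearMap.rTensor F K'.subtype s)) := by
    intro s
    induction s using TensorProduct.induction_on with
    | zero => simp only [map_zero]
    | tmul k x =>
      show ι ((TensorProduct.comm R N E) ((((k : I) : TrivSqZeroExt R N).snd : N) ⊗ₜ[R] π x))
          = (TensorProduct.lid (TrivSqZeroExt R N) F) (((k : I) : TrivSqZeroExt R N) ⊗ₜ x)
      show ι (π x ⊗ₜ[R] (((k : I) : TrivSqZeroExt R N).snd : N))
          = ((k : I) : TrivSqZeroExt R N) • x
      rw [hsmul, hK'fst, zero_smul, zero_add]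
    | add y z hy hz => simp only [map_add, hy, hz]
  have h6 : d s = 0 := by
    apply hγ
    rw [map_zero]
    apply (TensorProduct.comm R N E).injective
    apply hι
    rw [key2, hs, ht]
    simp only [map_zero]
  have h7 : s = 0 := dinj (by rw [h6, map_zero])
  rw [← hs, h7, map_zero]

theorem quot_aux {R N E F : Type} [CommRing R] [AddCommGroup N] [Module R N]
    [Module Rᵐᵒᵖ N] [IsCentralScalar R N]
    [AddCommGroup E] [Module R E] [AddCommGroup F] [Module R F]
    (ι : (E ⊗[R] N) →ₗ[R] F) (π : F →ₗ[R] E)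
    (hπ : Function.Surjective π) (hexact : LinearMap.range ι = LinearMap.ker π)
    [inst : Module (TrivSqZeroExt R N) F]
    (hsmul : ∀ (a : TrivSqZeroExt R N) (x : F), a • x = a.fst • x + ι (π x ⊗ₜ[R] a.snd))
    (K : Submodule (TrivSqZeroExt R N) F)
    (hK : K = RingHom.ker (TrivSqZeroExt.fstHom R R N) • (⊤ : Submodule (TrivSqZeroExt R N) F)) :
    letI : Module R (F ⧸ K) := Module.compHom (F ⧸ K) (algebraMap R (TrivSqZeroExt R N))
    ∃ e : (F ⧸ K) ≃ₗ[R] E, ∀ x : F, e (Submodule.Quotient.mk x) = π x := by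
  have hπι : ∀ y, π (ι y) = 0 := by
    intro y
    have : ι y ∈ LinearMap.range ι := ⟨y, rfl⟩
    rw [hexact, LinearMap.mem_ker] at this
    exact this
  have hinr : ∀ (n : N) (x : F), (inr n : TrivSqZeroExt R N) • x = ι (π x ⊗ₜ[R] n) := by
    intro n x; rw [hsmul]; simp
  have hKmem : ∀ x : F, x ∈ K ↔ π x = 0 := by
    intro x
    rw [hK]
    constructor
    · intro hx
      refine Submodule.smul_induction_on hx ?_ ?_
      · intro a ha y _
        rw [hsmul, map_add, hπι, add_zero, map_smul]
        have h0 : a.fst = 0 := by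
          have := RingHom.mem_ker.mp ha
          simpa using this
        rw [h0, zero_smul]
      · intro y z hy hz
        rw [map_add, hy, hz, add_zero]
    · intro hx
      have hx' : x ∈ LinearMap.range ι := by rw [hexact]; exact LinearMap.mem_ker.mpr hx
      obtain ⟨y, rfl⟩ := hx'
      clear hx
      induction y using TensorProduct.induction_on with
      | zero => rw [map_zero]; exact Submodule.zero_mem _
      | tmul e n =>
        obtain ⟨x', hx'⟩ := hπ e
        have heq : ι (e ⊗ₜ[R] n) = (inr n : TrivSqZeroExt R N) • x' := by rw [hinr, hx']
        rw [heq]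
        refine Submodule.smul_mem_smul ?_ trivial
        rw [RingHom.mem_ker]
        simp
      | add y z hy hz => rw [map_add]; exact Submodule.add_mem _ hy hz
  letI : Module (TrivSqZeroExt R N) E :=
    Module.compHom E (TrivSqZeroExt.fstHom R R N).toRingHom
  let π' : F →ₗ[TrivSqZeroExt R N] E :=
    { toFun := π
      map_add' := map_add π
      map_smul' := by
        intro a x
        show π (a • x) = a.fst • π x
        rw [hsmul, map_add, map_smul, hπι, add_zero] }
  have hKle : K ≤ LinearMap.ker π' := fun x hx => LinearMap.mem_ker.mpr ((hKmem x).mp hx)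
  let pE := K.liftQ π' hKle
  have hsurj : Function.Surjective pE := by
    intro e
    obtain ⟨x, hx⟩ := hπ e
    exact ⟨Submodule.Quotient.mk x, hx⟩
  have hker' : LinearMap.ker π' ≤ K := by
    intro x hx
    rw [LinearMap.mem_ker] at hx
    exact (hKmem x).mpr hx
  have hinj : Function.Injective pE := by
    rw [← LinearMap.ker_eq_bot]
    exact Submodule.ker_liftQ_eq_bot K π' hKle hker'
  let eA := LinearEquiv.ofBijective pE ⟨hinj, hsurj⟩
  letI : Module R (F ⧸ K) := Module.compHom (F ⧸ K) (algebraMap R (TrivSqZeroExt R N))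
  refine ⟨{ toFun := eA, invFun := eA.symm, left_inv := eA.left_inv,
            right_inv := eA.right_inv, map_add' := map_add eA, map_smul' := ?_ }, ?_⟩
  · intro r q
    show eA ((algebraMap R (TrivSqZeroExt R N) r) • q) = r • eA q
    rw [map_smul]
    show (TrivSqZeroExt.fstHom R R N (algebraMap R (TrivSqZeroExt R N) r)) • eA q = r • eA q
    simp [TrivSqZeroExt.algebraMap_eq_inl]
  · intro x
    rfl

/-- Let `R` be a commutative ring, `N` an `R`-module, `E` a flat `R`-module, and
`0 → E ⊗[R] N →ι F →π E → 0` a short exact sequence of `R`-modules.  Then the formula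
`(r,n) • x = r·x + ι(π(x) ⊗ n)` defines an `(R⋉N)`-module structure on `F` extending its
`R`-module structure; with this structure `F` is flat over `R⋉N`, and `F ⊗_{R⋉N} R` is
isomorphic to `E` via the map induced by `π`. -/
theorem extension_gives_flat_deformation
    (R : Type) [CommRing R] (N : Type) [AddCommGroup N] [Module R N]
    (E : Type) [AddCommGroup E] [Module R E] [Module.Flat R E]
    (F : Type) [AddCommGroup F] [Module R F]
    (ι : (E ⊗[R] N) →ₗ[R] F) (π : F →ₗ[R] E)
    (hι : Function.Injective ι) (hπ : Function.Surjective π)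
    (hexact : LinearMap.range ι = LinearMap.ker π) :
    letI : Module Rᵐᵒᵖ N := Module.compHom N ((RingHom.id R).fromOpposite mul_comm)
    haveI : IsCentralScalar R N := ⟨fun _ _ => rfl⟩
    ∃ inst : Module (TrivSqZeroExt R N) F,
      letI := inst
      (∀ (r : R) (n : N) (x : F),
          (TrivSqZeroExt.inl r + TrivSqZeroExt.inr n : TrivSqZeroExt R N) • x =
            r • x + ι (π x ⊗ₜ[R] n)) ∧
      Module.Flat (TrivSqZeroExt R N) F ∧
      ∀ (K : Submodule (TrivSqZeroExt R N) F),
        K = RingHom.ker (TrivSqZeroExt.fstHom R R N) • (⊤ : Submodule (TrivSqZeroExt R N) F) →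
        letI : Module R (F ⧸ K) :=
          Module.compHom (F ⧸ K) (algebraMap R (TrivSqZeroExt R N))
        ∃ e : (F ⧸ K) ≃ₗ[R] E,
          ∀ x : F, e (Submodule.Quotient.mk x) = π x := by
  letI : Module Rᵐᵒᵖ N := Module.compHom N ((RingHom.id R).fromOpposite mul_comm)
  haveI : IsCentralScalar R N := ⟨fun _ _ => rfl⟩
  have hπι : ∀ y, π (ι y) = 0 := by
    intro y
    have : ι y ∈ LinearMap.range ι := ⟨y, rfl⟩
    rw [hexact, LinearMap.mem_ker] at this
    exact this
  letI instA : Module (TrivSqZeroExt R N) F := deformModule ι π hπι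
  have hsmul : ∀ (a : TrivSqZeroExt R N) (x : F),
      a • x = a.fst • x + ι (π x ⊗ₜ[R] a.snd) := fun _ _ => rfl
  refine ⟨instA, ?_, ?_, ?_⟩
  · intro r n x
    rw [hsmul]
    simp
  · exact flat_aux ι π hι hπ hexact hsmul
  · intro K hK
    exact quot_aux ι π hπ hexact hsmul K hK
end

section
/- In the three-ring deformation setup below, suppose given a short exact sequence of A₀-modules 0 → E ⊗_A 𝔪 →ι 𝔽 →π E₀ → 0 together with an A₀-linear map Π : 𝔽 → E which, with the natural surjection E ⊗_A 𝔪 → E ⊗_A 𝔫 on the left and the identity of E₀ on the right, defines a morphism of short exact sequences to 0 → E ⊗_A 𝔫 → E → E₀ → 0. Then, writing each element of A₁ uniquely as a + m with a in the image of A₀ → A₁ and m ∈ 𝔪 (using the splitting coming from the section A₀ → A₁), the formula (a + m) • x = a·x + ι(Π(x) ⊗ m) defines an A₁-module structure on 𝔽, the module 𝔽 is flat over A₁, and 𝔽 ⊗_{A₁} A is isomorphic to E as an A-module. -/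
open TensorProduct

set_option linter.unusedSectionVars false

open TensorProduct

namespace LiftFlatAux

section Generic

variable {R : Type} [CommRing R]

theorem tmul_eq_zero_of_mem_smul_top {M N : Type} [AddCommGroup M] [AddCommGroup N]
    [Module R M] [Module R N] (K : Ideal R) (hN : ∀ a ∈ K, ∀ n : N, a • n = 0)
    {m : M} (hm : m ∈ K • (⊤ : Submodule R M)) (n : N) :
    (m ⊗ₜ[R] n : M ⊗[R] N) = 0 := by
  refine Submodule.smul_induction_on hm (fun r hr x _ => ?_) (fun x y hx hy => ?_)
  · rw [smul_tmul, hN r hr, tmul_zero]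
  · rw [add_tmul, hx, hy, add_zero]

theorem rTensor_bijective (K : Ideal R) {M M' N : Type}
    [AddCommGroup M] [AddCommGroup M'] [AddCommGroup N]
    [Module R M] [Module R M'] [Module R N]
    (hN : ∀ a ∈ K, ∀ n : N, a • n = 0)
    (g : M →ₗ[R] M') (hg : Function.Surjective g)
    (hker : LinearMap.ker g ≤ K • (⊤ : Submodule R M)) :
    Function.Bijective (LinearMap.rTensor N g) := by
  constructor
  · rw [injective_iff_map_eq_zero]
    intro t ht
    obtain ⟨s, rfl⟩ := (rTensor_exact N (LinearMap.exact_subtype_ker_map g) hg t).mp ht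
    have hz : LinearMap.rTensor N (LinearMap.ker g).subtype = 0 := by
      apply TensorProduct.ext'
      intro x n
      simp only [LinearMap.rTensor_tmul, LinearMap.zero_apply, Submodule.coe_subtype]
      exact tmul_eq_zero_of_mem_smul_top K hN (hker x.2) n
    rw [hz, LinearMap.zero_apply]
  · exact LinearMap.rTensor_surjective N hg

theorem smul_quot_eq (K : Ideal R) {N : Type} [AddCommGroup N] [Module R N]
    [Module (R ⧸ K) N] [IsScalarTower R (R ⧸ K) N] (a : R) (x : N) :
    a • x = Ideal.Quotient.mk K a • x := by
  conv_lhs => rw [← one_smul (R ⧸ K) x, ← smul_assoc]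
  congr 1
  rw [Algebra.smul_def, mul_one, Ideal.Quotient.algebraMap_eq]

theorem tower_of_smul_eq (K : Ideal R) {N : Type} [AddCommGroup N] [Module R N]
    [Module (R ⧸ K) N] (h : ∀ (a : R) (x : N), a • x = Ideal.Quotient.mk K a • x) :
    IsScalarTower R (R ⧸ K) N := by
  constructor
  intro a b x
  obtain ⟨b', rfl⟩ := Ideal.Quotient.mk_surjective b
  have h1 : a • Ideal.Quotient.mk K b' = Ideal.Quotient.mk K (a * b') := by
    rw [Algebra.smul_def, Ideal.Quotient.algebraMap_eq, ← map_mul]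
  rw [h1, map_mul, mul_smul, ← h]

theorem compatibleSMul_quot (K : Ideal R) (M N : Type) [AddCommGroup M] [AddCommGroup N]
    [Module R M] [Module R N] [Module (R ⧸ K) M] [Module (R ⧸ K) N]
    [IsScalarTower R (R ⧸ K) M] [IsScalarTower R (R ⧸ K) N] :
    TensorProduct.CompatibleSMul R (R ⧸ K) M N := by
  constructor
  intro c m n
  obtain ⟨a, rfl⟩ := Ideal.Quotient.mk_surjective c
  rw [← smul_quot_eq, ← smul_quot_eq, smul_tmul]

theorem smulCommClass_quot (K : Ideal R) {N : Type} [AddCommGroup N] [Module R N]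
    [Module (R ⧸ K) N] [IsScalarTower R (R ⧸ K) N] :
    SMulCommClass (R ⧸ K) R N := by
  constructor
  intro c a x
  rw [smul_quot_eq K a x, smul_quot_eq K a (c • x), smul_comm]

theorem equivOfCompatibleSMul_tmul (K : Ideal R) (M N : Type) [AddCommGroup M] [AddCommGroup N]
    [Module R M] [Module R N] [Module (R ⧸ K) M] [Module (R ⧸ K) N]
    [IsScalarTower R (R ⧸ K) M] [IsScalarTower R (R ⧸ K) N] (m : M) (n : N) :
    haveI := compatibleSMul_quot K M N
    haveI := smulCommClass_quot (N := M) K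
    TensorProduct.equivOfCompatibleSMul (R ⧸ K) R R M N (m ⊗ₜ[R] n) = m ⊗ₜ[R ⧸ K] n := rfl

theorem lTensor_injective_of_flat_quot (K : Ideal R) (P N N' : Type)
    [AddCommGroup P] [AddCommGroup N] [AddCommGroup N']
    [Module R P] [Module R N] [Module R N']
    [Module (R ⧸ K) P] [Module (R ⧸ K) N] [Module (R ⧸ K) N']
    [IsScalarTower R (R ⧸ K) P] [IsScalarTower R (R ⧸ K) N] [IsScalarTower R (R ⧸ K) N']
    [Module.Flat (R ⧸ K) P]
    (f : N →ₗ[R] N') (hf : Function.Injective f) :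
    Function.Injective (LinearMap.lTensor P f) := by
  haveI := compatibleSMul_quot K P N
  haveI := compatibleSMul_quot K P N'
  haveI := smulCommClass_quot (N := P) K
  let eN := TensorProduct.equivOfCompatibleSMul (R ⧸ K) R R P N
  let eN' := TensorProduct.equivOfCompatibleSMul (R ⧸ K) R R P N'
  let f' : N →ₗ[R ⧸ K] N' :=
    { toFun := f
      map_add' := f.map_add
      map_smul' := by
        intro c x
        obtain ⟨a, rfl⟩ := Ideal.Quotient.mk_surjective c
        simp only [RingHom.id_apply]
        rw [← smul_quot_eq K a x, ← smul_quot_eq K a (f x), f.map_smul] }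
  have hcomm : ∀ t, eN' (LinearMap.lTensor P f t) = LinearMap.lTensor P f' (eN t) := by
    intro t
    induction t with
    | zero => simp
    | tmul p n => rfl
    | add x y hx hy => simp only [map_add, hx, hy]
  have hinj' : Function.Injective (LinearMap.lTensor P f') :=
    Module.Flat.lTensor_preserves_injective_linearMap (M := P) f' hf
  intro s t hst
  apply eN.injective
  apply hinj'
  rw [← hcomm, ← hcomm, hst]


end Generic

section Decomp

variable {A₀ A₁ : Type} [CommRing A₀] [CommRing A₁] [Algebra A₀ A₁]
variable {𝔦 𝔪 : Ideal A₁}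
variable (hbij : Function.Bijective ((Ideal.Quotient.mk 𝔪).comp (algebraMap A₀ A₁)))

noncomputable def retr : A₁ →+* A₀ :=
  ((RingEquiv.ofBijective _ hbij).symm : A₁ ⧸ 𝔪 ≃+* A₀).toRingHom.comp (Ideal.Quotient.mk 𝔪)

theorem retr_algebraMap (a₀ : A₀) : retr hbij (algebraMap A₀ A₁ a₀) = a₀ := by
  have : Ideal.Quotient.mk 𝔪 (algebraMap A₀ A₁ a₀) = RingEquiv.ofBijective _ hbij a₀ := rfl
  simp only [retr, RingHom.coe_comp, Function.comp_apply, RingEquiv.toRingHom_eq_coe,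
    RingEquiv.coe_toRingHom, this, RingEquiv.symm_apply_apply]

theorem sub_retr_mem (a : A₁) : a - algebraMap A₀ A₁ (retr hbij a) ∈ 𝔪 := by
  have h1 : Ideal.Quotient.mk 𝔪 (algebraMap A₀ A₁ (retr hbij a)) = Ideal.Quotient.mk 𝔪 a := by
    have : ∀ x : A₀, Ideal.Quotient.mk 𝔪 (algebraMap A₀ A₁ x) = RingEquiv.ofBijective _ hbij x :=
      fun _ => rfl
    rw [this, retr]
    exact (RingEquiv.ofBijective _ hbij).apply_symm_apply (Ideal.Quotient.mk 𝔪 a)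
  have := Ideal.Quotient.eq.mp h1.symm
  simpa using this

noncomputable def dd (a : A₁) : ↥𝔪 := ⟨a - algebraMap A₀ A₁ (retr hbij a), sub_retr_mem hbij a⟩

theorem retr_add_dd (a : A₁) : algebraMap A₀ A₁ (retr hbij a) + (dd hbij a : A₁) = a := by
  simp [dd]

theorem dd_add (a b : A₁) : dd hbij (a + b) = dd hbij a + dd hbij b := by
  apply Subtype.ext
  simp only [dd, map_add, Submodule.coe_add]
  ring

theorem dd_algebraMap (a₀ : A₀) : dd hbij (algebraMap A₀ A₁ a₀) = 0 := by
  apply Subtype.ext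
  simp [dd, retr_algebraMap]

theorem dd_one : dd hbij (1 : A₁) = 0 := by
  simpa using dd_algebraMap hbij 1

theorem retr_mem (a : A₁) (ha : a ∈ 𝔪) : retr hbij a = 0 := by
  have h1 : Ideal.Quotient.mk 𝔪 a = 0 := Ideal.Quotient.eq_zero_iff_mem.mpr ha
  simp only [retr, RingHom.coe_comp, Function.comp_apply, RingEquiv.toRingHom_eq_coe,
    RingEquiv.coe_toRingHom, h1, map_zero]

theorem dd_mem (a : A₁) (ha : a ∈ 𝔪) : dd hbij a = ⟨a, ha⟩ := by
  apply Subtype.ext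
  simp [dd, retr_mem hbij a ha]

end Decomp

section Main

variable {A₀ A₁ : Type} [CommRing A₀] [CommRing A₁] [Algebra A₀ A₁]
variable {𝔦 𝔪 : Ideal A₁} (him : 𝔦 ≤ 𝔪) (hmul : 𝔪 * 𝔦 = ⊥)
variable (hbij : Function.Bijective ((Ideal.Quotient.mk 𝔪).comp (algebraMap A₀ A₁)))
variable {E : Type} [AddCommGroup E] [instEA : Module (A₁ ⧸ 𝔦) E] [Module.Flat (A₁ ⧸ 𝔦) E]
variable [instM : Module (A₁ ⧸ 𝔦) ↥𝔪]
variable [instE0 : Module A₀ E] [instT0 : Module A₀ (E ⊗[A₁ ⧸ 𝔦] ↥𝔪)]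
variable [instQ0 : Module A₀
    (E ⧸ (Ideal.map (Ideal.Quotient.mk 𝔦) 𝔪 • (⊤ : Submodule (A₁ ⧸ 𝔦) E)))]
variable [instE1 : Module A₁ E]
variable (hM : ∀ (a : A₁) (m : ↥𝔪), ((Ideal.Quotient.mk 𝔦 a • m : ↥𝔪) : A₁) = a * (m : A₁))
variable (hE0 : ∀ (a₀ : A₀) (x : E), a₀ • x = algebraMap A₀ (A₁ ⧸ 𝔦) a₀ • x)
variable (hT0 : ∀ (a₀ : A₀) (t : E ⊗[A₁ ⧸ 𝔦] ↥𝔪),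
    a₀ • t = algebraMap A₀ (A₁ ⧸ 𝔦) a₀ • t)
variable (hE1 : ∀ (a : A₁) (x : E), a • x = Ideal.Quotient.mk 𝔦 a • x)
variable {𝔽 : Type} [AddCommGroup 𝔽] [inst𝔽 : Module A₀ 𝔽]
variable (ι : (E ⊗[A₁ ⧸ 𝔦] ↥𝔪) →ₗ[A₀] 𝔽)
variable (π : 𝔽 →ₗ[A₀]
    (E ⧸ (Ideal.map (Ideal.Quotient.mk 𝔦) 𝔪 • (⊤ : Submodule (A₁ ⧸ 𝔦) E))))
variable (Φ : 𝔽 →ₗ[A₀] E)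
variable (hι : Function.Injective ι) (hπ : Function.Surjective π)
variable (hex : LinearMap.range ι = LinearMap.ker π)
variable (hleft : ∀ (x : E) (m : ↥𝔪),
    Φ (ι (x ⊗ₜ[A₁ ⧸ 𝔦] m)) = (Ideal.Quotient.mk 𝔦 (m : A₁)) • x)
variable (hright : ∀ x : 𝔽,
    (Submodule.Quotient.mk (Φ x) :
      E ⧸ (Ideal.map (Ideal.Quotient.mk 𝔦) 𝔪 • (⊤ : Submodule (A₁ ⧸ 𝔦) E))) = π x)

/-- The `A₁`-scalar multiplication on `𝔽`. -/
noncomputable def smulF : SMul A₁ 𝔽 :=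
  ⟨fun a x => retr hbij a • x + ι (Φ x ⊗ₜ[A₁ ⧸ 𝔦] dd hbij a)⟩

theorem dd_coe {A₀ A₁ : Type} [CommRing A₀] [CommRing A₁] [Algebra A₀ A₁] {𝔪 : Ideal A₁}
    (hbij : Function.Bijective ((Ideal.Quotient.mk 𝔪).comp (algebraMap A₀ A₁))) (a : A₁) :
    ((dd hbij a : ↥𝔪) : A₁) = a - algebraMap A₀ A₁ (retr hbij a) := rfl

include hM in
theorem mk_smul_m (a : A₁) (m : ↥𝔪) :
    (Ideal.Quotient.mk 𝔦 a) • m = (⟨a * (m : A₁), Ideal.mul_mem_left 𝔪 a m.2⟩ : ↥𝔪) :=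
  Subtype.ext (hM a m)

include hM hE0 hT0 hleft in
/-- The `A₁`-module structure on `𝔽`. -/
noncomputable def moduleF : Module A₁ 𝔽 :=
  letI := smulF hbij ι Φ
  Module.ofMinimalAxioms
    (smul_add := fun a x y => by
      show retr hbij a • (x + y) + ι (Φ (x + y) ⊗ₜ[A₁ ⧸ 𝔦] dd hbij a) = _
      rw [map_add Φ, add_tmul, map_add ι, smul_add]
      show _ = retr hbij a • x + ι (Φ x ⊗ₜ[A₁ ⧸ 𝔦] dd hbij a) +
        (retr hbij a • y + ι (Φ y ⊗ₜ[A₁ ⧸ 𝔦] dd hbij a))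
      abel)
    (add_smul := fun a b x => by
      show retr hbij (a + b) • x + ι (Φ x ⊗ₜ[A₁ ⧸ 𝔦] dd hbij (a + b)) = _
      rw [map_add (retr hbij), dd_add, tmul_add, map_add ι, add_smul]
      show _ = retr hbij a • x + ι (Φ x ⊗ₜ[A₁ ⧸ 𝔦] dd hbij a) +
        (retr hbij b • x + ι (Φ x ⊗ₜ[A₁ ⧸ 𝔦] dd hbij b))
      abel)
    (mul_smul := fun a b x => by
      show retr hbij (a * b) • x + ι (Φ x ⊗ₜ[A₁ ⧸ 𝔦] dd hbij (a * b)) =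
        retr hbij a • (retr hbij b • x + ι (Φ x ⊗ₜ[A₁ ⧸ 𝔦] dd hbij b)) +
          ι (Φ (retr hbij b • x + ι (Φ x ⊗ₜ[A₁ ⧸ 𝔦] dd hbij b)) ⊗ₜ[A₁ ⧸ 𝔦] dd hbij a)
      have hΦb : Φ (retr hbij b • x + ι (Φ x ⊗ₜ[A₁ ⧸ 𝔦] dd hbij b)) =
          Ideal.Quotient.mk 𝔦 b • Φ x := by
        rw [map_add, map_smul, hleft, hE0, ← Ideal.Quotient.mk_algebraMap, ← add_smul, ← map_add,
          retr_add_dd]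
      rw [map_mul (retr hbij), mul_smul, hΦb, smul_add, ← map_smul ι, hT0, ← tmul_smul,
        smul_tmul, add_assoc, ← map_add ι, ← tmul_add]
      congr 2
      congr 1
      apply Subtype.ext
      rw [Submodule.coe_add]
      rw [show ((algebraMap A₀ (A₁ ⧸ 𝔦) (retr hbij a) • dd hbij b : ↥𝔪) : A₁) =
          algebraMap A₀ A₁ (retr hbij a) * ((dd hbij b : ↥𝔪) : A₁) from by
        rw [← Ideal.Quotient.mk_algebraMap, hM]]
      rw [hM, dd_coe, dd_coe, dd_coe, map_mul (retr hbij), map_mul (algebraMap A₀ A₁)]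
      ring)
    (one_smul := fun x => by
      show retr hbij 1 • x + ι (Φ x ⊗ₜ[A₁ ⧸ 𝔦] dd hbij 1) = x
      rw [map_one (retr hbij), dd_one, tmul_zero, map_zero, add_zero, one_smul])

include hM hE0 hT0 hleft in
theorem smul_def_F (a : A₁) (x : 𝔽) :
    letI := moduleF hbij hM hE0 hT0 ι Φ hleft
    a • x = retr hbij a • x + ι (Φ x ⊗ₜ[A₁ ⧸ 𝔦] dd hbij a) := rfl

include hM hE0 hT0 hleft in
theorem smul_mem_m {a : A₁} (ha : a ∈ 𝔪) (x : 𝔽) :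
    letI := moduleF hbij hM hE0 hT0 ι Φ hleft
    a • x = ι (Φ x ⊗ₜ[A₁ ⧸ 𝔦] (⟨a, ha⟩ : ↥𝔪)) := by
  rw [smul_def_F hbij hM hE0 hT0 ι Φ hleft, retr_mem hbij a ha, zero_smul, zero_add,
    dd_mem hbij a ha]

include hM hE0 hT0 hleft in
theorem smul_algebraMap_F (a₀ : A₀) (x : 𝔽) :
    letI := moduleF hbij hM hE0 hT0 ι Φ hleft
    (algebraMap A₀ A₁ a₀) • x = a₀ • x := by
  rw [smul_def_F hbij hM hE0 hT0 ι Φ hleft, retr_algebraMap, dd_algebraMap, tmul_zero,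
    map_zero, add_zero]

include hM hE0 hT0 hleft in
theorem smul_formula (a₀ : A₀) (m : ↥𝔪) (x : 𝔽) :
    letI := moduleF hbij hM hE0 hT0 ι Φ hleft
    (algebraMap A₀ A₁ a₀ + (m : A₁)) • x = a₀ • x + ι (Φ x ⊗ₜ[A₁ ⧸ 𝔦] m) := by
  letI := moduleF hbij hM hE0 hT0 ι Φ hleft
  rw [add_smul, smul_algebraMap_F hbij hM hE0 hT0 ι Φ hleft,
    smul_mem_m hbij hM hE0 hT0 ι Φ hleft m.2 x]

include hM hE0 hT0 hE1 hleft in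
/-- `Φ` as an `A₁`-linear map. -/
noncomputable def phiL :
    letI := moduleF hbij hM hE0 hT0 ι Φ hleft
    𝔽 →ₗ[A₁] E :=
  letI := moduleF hbij hM hE0 hT0 ι Φ hleft
  { toFun := Φ
    map_add' := Φ.map_add
    map_smul' := by
      intro a x
      simp only [RingHom.id_apply]
      rw [smul_def_F hbij hM hE0 hT0 ι Φ hleft, map_add, map_smul, hleft, hE0,
        ← Ideal.Quotient.mk_algebraMap, ← add_smul, ← map_add, retr_add_dd, ← hE1] }

include hM hE0 hT0 hE1 hleft in
theorem phiL_apply (x : 𝔽) : phiL hbij hM hE0 hT0 hE1 ι Φ hleft x = Φ x := rfl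

include hM hE0 hT0 hleft hright hπ in
theorem phi_surjective : Function.Surjective Φ := by
  intro e
  obtain ⟨x, hx⟩ := hπ (Submodule.Quotient.mk e)
  have h1 : (Submodule.Quotient.mk (Φ x) :
      E ⧸ (Ideal.map (Ideal.Quotient.mk 𝔦) 𝔪 • (⊤ : Submodule (A₁ ⧸ 𝔦) E))) =
      Submodule.Quotient.mk e := by rw [hright x, hx]
  have h2 : Φ x - e ∈ (Ideal.map (Ideal.Quotient.mk 𝔦) 𝔪 • (⊤ : Submodule (A₁ ⧸ 𝔦) E)) :=
    (Submodule.Quotient.eq _).mp h1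
  have h3 : ∀ z ∈ (Ideal.map (Ideal.Quotient.mk 𝔦) 𝔪 • (⊤ : Submodule (A₁ ⧸ 𝔦) E)),
      z ∈ LinearMap.range Φ := by
    intro z hz
    refine Submodule.smul_induction_on hz ?_ ?_
    · intro c hc e' _
      obtain ⟨m, hm, rfl⟩ :=
        (Ideal.mem_map_iff_of_surjective _ Ideal.Quotient.mk_surjective).mp hc
      exact ⟨ι (e' ⊗ₜ[A₁ ⧸ 𝔦] (⟨m, hm⟩ : ↥𝔪)), hleft e' ⟨m, hm⟩⟩
    · intro z w hz hw
      exact (LinearMap.range Φ).add_mem hz hw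
  obtain ⟨y, hy⟩ := h3 _ h2
  exact ⟨x - y, by rw [map_sub, hy]; abel⟩

include him hmul hι hex hright hπ in
theorem ker_phiL :
    letI := moduleF hbij hM hE0 hT0 ι Φ hleft
    LinearMap.ker (phiL hbij hM hE0 hT0 hE1 ι Φ hleft) = 𝔦 • (⊤ : Submodule A₁ 𝔽) := by
  letI := moduleF hbij hM hE0 hT0 ι Φ hleft
  apply le_antisymm
  · -- the hard inclusion
    intro x hx
    have hΦx : Φ x = 0 := hx
    have hπx : π x = 0 := by rw [← hright x, hΦx]; simp
    have hxr : x ∈ LinearMap.range ι := by rw [hex]; exact hπx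
    obtain ⟨t, rfl⟩ := hxr
    -- analyse `t` using flatness of `E` over `A₁ ⧸ 𝔦`
    have hmbar_smul : ∀ (c : A₁ ⧸ 𝔦) (m : ↥𝔪),
        Ideal.Quotient.mk 𝔦 ((c • m : ↥𝔪) : A₁) = c * Ideal.Quotient.mk 𝔦 (m : A₁) := by
      intro c m
      obtain ⟨a, rfl⟩ := Ideal.Quotient.mk_surjective c
      rw [hM a m, map_mul]
    let mbar : ↥𝔪 →ₗ[A₁ ⧸ 𝔦] (A₁ ⧸ 𝔦) :=
      { toFun := fun m => Ideal.Quotient.mk 𝔦 (m : A₁)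
        map_add' := by intro m n; simp
        map_smul' := by intro c m; simpa using hmbar_smul c m }
    let mbar' : ↥𝔪 →ₗ[A₁ ⧸ 𝔦] ↥(Ideal.map (Ideal.Quotient.mk 𝔦) 𝔪) :=
      mbar.codRestrict (Ideal.map (Ideal.Quotient.mk 𝔦) 𝔪)
        (fun m => Ideal.mem_map_of_mem _ m.2)
    have hsurj' : Function.Surjective mbar' := by
      rintro ⟨y, hy⟩
      obtain ⟨m, hm, rfl⟩ :=
        (Ideal.mem_map_iff_of_surjective _ Ideal.Quotient.mk_surjective).mp hy
      exact ⟨⟨m, hm⟩, rfl⟩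
    have key : ∀ s : E ⊗[A₁ ⧸ 𝔦] ↥𝔪, Φ (ι s) =
        TensorProduct.rid (A₁ ⧸ 𝔦) E
          (LinearMap.lTensor E (Ideal.map (Ideal.Quotient.mk 𝔦) 𝔪).subtype
            (LinearMap.lTensor E mbar' s)) := by
      intro s
      induction s using TensorProduct.induction_on with
      | zero => simp
      | tmul e m =>
        rw [hleft]
        simp [mbar', mbar]
      | add u v hu hv =>
        rw [map_add ι, map_add Φ, map_add, map_add, map_add, hu, hv]
    have h0 : LinearMap.lTensor E mbar' t = 0 := by
      have hinj := Module.Flat.lTensor_preserves_injective_linearMap (M := E)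
        (Ideal.map (Ideal.Quotient.mk 𝔦) 𝔪).subtype (Submodule.injective_subtype _)
      apply hinj
      rw [map_zero]
      apply (TensorProduct.rid (A₁ ⧸ 𝔦) E).injective
      rw [map_zero, ← key t]
      exact hΦx
    obtain ⟨s, hs⟩ := (lTensor_exact E (LinearMap.exact_subtype_ker_map mbar') hsurj' t).mp h0
    rw [← hs]
    clear hs hΦx hπx h0
    induction s using TensorProduct.induction_on with
    | zero => simpa using Submodule.zero_mem _
    | tmul e k =>
      have hk : ((k : ↥𝔪) : A₁) ∈ 𝔦 := by
        have h6 : mbar' (k : ↥𝔪) = 0 := LinearMap.mem_ker.mp k.2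
        have h7 : Ideal.Quotient.mk 𝔦 (((k : ↥𝔪) : A₁)) = 0 := congrArg Subtype.val h6
        exact Ideal.Quotient.eq_zero_iff_mem.mp h7
      obtain ⟨y, hy⟩ := phi_surjective hM hE0 hT0 ι π Φ hπ hleft hright e
      have h5 := smul_mem_m hbij hM hE0 hT0 ι Φ hleft (him hk) y
      have h8 : (⟨((k : ↥𝔪) : A₁), him hk⟩ : ↥𝔪) = (k : ↥𝔪) := Subtype.ext rfl
      rw [h8, hy] at h5
      have h9 : LinearMap.lTensor E (LinearMap.ker mbar').subtype (e ⊗ₜ[A₁ ⧸ 𝔦] k) =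
          e ⊗ₜ[A₁ ⧸ 𝔦] (k : ↥𝔪) := rfl
      rw [h9, ← h5]
      exact Submodule.smul_mem_smul hk trivial
    | add u v hu hv =>
      rw [map_add, map_add]
      exact Submodule.add_mem _ hu hv
  · rw [Submodule.smul_le]
    intro i hi x _
    have : Φ (i • x) = 0 := by
      rw [← phiL_apply hbij hM hE0 hT0 hE1 ι Φ hleft, map_smul, phiL_apply, hE1,
        Ideal.Quotient.eq_zero_iff_mem.mpr hi, zero_smul]
    exact this

include him hmul hbij hM hE0 hT0 hE1 hι hπ hex hleft hright in
set_option maxHeartbeats 2000000 in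
theorem flatF :
    letI := moduleF hbij hM hE0 hT0 ι Φ hleft
    Module.Flat A₁ 𝔽 := by
  letI := moduleF hbij hM hE0 hT0 ι Φ hleft
  refine (Module.Flat.iff_lTensor_injective' (R := A₁) (M := 𝔽)).mpr fun J => ?_
  rw [injective_iff_map_eq_zero]
  intro t ht
  haveI tE : IsScalarTower A₁ (A₁ ⧸ 𝔦) E := tower_of_smul_eq 𝔦 hE1
  haveI tM : IsScalarTower A₁ (A₁ ⧸ 𝔦) ↥𝔪 := tower_of_smul_eq 𝔦 (fun a m => by
    apply Subtype.ext
    rw [hM]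
    rfl)
  haveI smcc : SMulCommClass (A₁ ⧸ 𝔦) A₁ E := smulCommClass_quot 𝔦
  -- the image ideal
  letI : Module A₁ ↥(Ideal.map (Ideal.Quotient.mk 𝔦) J) :=
    Module.compHom _ (Ideal.Quotient.mk 𝔦)
  haveI tJ : IsScalarTower A₁ (A₁ ⧸ 𝔦) ↥(Ideal.map (Ideal.Quotient.mk 𝔦) J) :=
    tower_of_smul_eq 𝔦 (fun a x => rfl)
  let hbar : ↥J →ₗ[A₁] ↥(Ideal.map (Ideal.Quotient.mk 𝔦) J) :=
    { toFun := fun j => ⟨Ideal.Quotient.mk 𝔦 (j : A₁), Ideal.mem_map_of_mem _ j.2⟩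
      map_add' := by intro j j'; apply Subtype.ext; simp
      map_smul' := by
        intro a j
        apply Subtype.ext
        show Ideal.Quotient.mk 𝔦 (a • (j : A₁)) =
          Ideal.Quotient.mk 𝔦 a * Ideal.Quotient.mk 𝔦 (j : A₁)
        rw [smul_eq_mul, map_mul] }
  have hbar_surj : Function.Surjective hbar := by
    rintro ⟨y, hy⟩
    obtain ⟨j, hj, rfl⟩ :=
      (Ideal.mem_map_iff_of_surjective _ Ideal.Quotient.mk_surjective).mp hy
    exact ⟨⟨j, hj⟩, rfl⟩
  haveI := @compatibleSMul_quot _ _ 𝔦 E ↥(Ideal.map (Ideal.Quotient.mk 𝔦) J) _ _ _ _ _ _ _ tJ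
  haveI : TensorProduct.CompatibleSMul (A₁ ⧸ 𝔦) A₁ E ↥(Ideal.map (Ideal.Quotient.mk 𝔦) J) := by
    constructor
    intro r m n
    rw [hE1, smul_tmul]
    rfl
  let eJ := TensorProduct.equivOfCompatibleSMul (A₁ ⧸ 𝔦) A₁ A₁ E
    ↥(Ideal.map (Ideal.Quotient.mk 𝔦) J)
  let Φ' := phiL hbij hM hE0 hT0 hE1 ι Φ hleft
  have key1 : ∀ s : 𝔽 ⊗[A₁] ↥J,
      TensorProduct.rid (A₁ ⧸ 𝔦) E
        (LinearMap.lTensor E (Ideal.map (Ideal.Quotient.mk 𝔦) J).subtype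
          (eJ (LinearMap.rTensor _ Φ' (LinearMap.lTensor 𝔽 hbar s)))) =
      Φ (TensorProduct.rid A₁ 𝔽 (LinearMap.lTensor 𝔽 J.subtype s)) := by
    intro s
    induction s using TensorProduct.induction_on with
    | zero => simp
    | tmul x j =>
      have h1 : TensorProduct.rid A₁ 𝔽 (LinearMap.lTensor 𝔽 J.subtype (x ⊗ₜ[A₁] j)) =
          (j : A₁) • x := by simp
      have h2 : Φ ((j : A₁) • x) = Ideal.Quotient.mk 𝔦 (j : A₁) • Φ x := by
        rw [← phiL_apply hbij hM hE0 hT0 hE1 ι Φ hleft, map_smul, phiL_apply, hE1]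
      rw [h1, h2]
      rfl
    | add u v hu hv =>
      simp only [map_add, hu, hv]
  -- step 1 : kill the image in `E ⊗ J̄`
  have h3 : LinearMap.lTensor 𝔽 hbar t = 0 := by
    have h4 : LinearMap.rTensor _ Φ' (LinearMap.lTensor 𝔽 hbar t) = 0 := by
      apply eJ.injective
      rw [map_zero]
      apply Module.Flat.lTensor_preserves_injective_linearMap (M := E)
        (Ideal.map (Ideal.Quotient.mk 𝔦) J).subtype (Submodule.injective_subtype _)
      rw [map_zero]
      apply (TensorProduct.rid (A₁ ⧸ 𝔦) E).injective
      rw [map_zero, key1 t, ht, map_zero, map_zero]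
    have h5 : Function.Bijective (LinearMap.rTensor
        ↥(Ideal.map (Ideal.Quotient.mk 𝔦) J) Φ') := by
      apply rTensor_bijective 𝔦
      · intro a ha n
        show Ideal.Quotient.mk 𝔦 a • n = 0
        rw [Ideal.Quotient.eq_zero_iff_mem.mpr ha, zero_smul]
      · exact phi_surjective hM hE0 hT0 ι π Φ hπ hleft hright
      · exact le_of_eq (ker_phiL him hmul hbij hM hE0 hT0 hE1 ι π Φ hι hπ hex hleft hright)
    apply h5.injective
    rw [h4, map_zero]
  obtain ⟨s, hs⟩ :=
    (lTensor_exact 𝔽 (LinearMap.exact_subtype_ker_map hbar) hbar_surj t).mp h3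
  -- step 2 : the kernel of `hbar`
  have hker_i : ∀ k : ↥(LinearMap.ker hbar), (((k : ↥J) : A₁)) ∈ 𝔦 := by
    intro k
    have h6 : hbar (k : ↥J) = 0 := LinearMap.mem_ker.mp k.2
    exact Ideal.Quotient.eq_zero_iff_mem.mp (congrArg Subtype.val h6)
  have hkill : ∀ a ∈ 𝔦, ∀ k : ↥(LinearMap.ker hbar), a • k = 0 := by
    intro a ha k
    apply Subtype.ext
    apply Subtype.ext
    show a * ((k : ↥J) : A₁) = 0
    have h20 : a * ((k : ↥J) : A₁) ∈ 𝔪 * 𝔦 :=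
      Ideal.mul_mem_mul (him ha) (hker_i k)
    rwa [hmul, Ideal.mem_bot] at h20
  haveI torK : Module.IsTorsionBySet A₁ ↥(LinearMap.ker hbar) (𝔦 : Set A₁) :=
    fun k a => hkill a a.2 k
  letI MK : Module (A₁ ⧸ 𝔦) ↥(LinearMap.ker hbar) := torK.module
  haveI tK : IsScalarTower A₁ (A₁ ⧸ 𝔦) ↥(LinearMap.ker hbar) :=
    tower_of_smul_eq 𝔦 (fun a k => (Module.IsTorsionBySet.mk_smul torK a k).symm)
  let inc : ↥(LinearMap.ker hbar) →ₗ[A₁] ↥𝔪 :=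
    { toFun := fun k => ⟨((k : ↥J) : A₁), him (hker_i k)⟩
      map_add' := by intro k k'; apply Subtype.ext; simp
      map_smul' := by intro a k; apply Subtype.ext; simp }
  have hinc : Function.Injective inc := by
    intro k k' h
    have h' : ((k : ↥J) : A₁) = ((k' : ↥J) : A₁) := congrArg (fun z : ↥𝔪 => (z : A₁)) h
    exact Subtype.ext (Subtype.ext h')
  have hincT : Function.Injective (LinearMap.lTensor E inc) :=
    lTensor_injective_of_flat_quot 𝔦 E ↥(LinearMap.ker hbar) ↥𝔪 inc hinc
  haveI := compatibleSMul_quot 𝔦 E ↥𝔪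
  let eM := TensorProduct.equivOfCompatibleSMul (A₁ ⧸ 𝔦) A₁ A₁ E ↥𝔪
  have key2 : ∀ s : 𝔽 ⊗[A₁] ↥(LinearMap.ker hbar),
      ι (eM (LinearMap.lTensor E inc (LinearMap.rTensor _ Φ' s))) =
      TensorProduct.rid A₁ 𝔽 (LinearMap.lTensor 𝔽 J.subtype
        (LinearMap.lTensor 𝔽 (LinearMap.ker hbar).subtype s)) := by
    intro s
    induction s using TensorProduct.induction_on with
    | zero => simp
    | tmul x k =>
      have h1 : TensorProduct.rid A₁ 𝔽 (LinearMap.lTensor 𝔽 J.subtype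
          (LinearMap.lTensor 𝔽 (LinearMap.ker hbar).subtype (x ⊗ₜ[A₁] k))) =
          (((k : ↥J) : A₁)) • x := by simp
      have h5 := smul_mem_m hbij hM hE0 hT0 ι Φ hleft (him (hker_i k)) x
      rw [h1, h5]
      rfl
    | add u v hu hv =>
      simp only [map_add, hu, hv]
  -- conclude
  have h7 : LinearMap.rTensor ↥(LinearMap.ker hbar) Φ' s = 0 := by
    have h8 : ι (eM (LinearMap.lTensor E inc (LinearMap.rTensor _ Φ' s))) = 0 := by
      rw [key2 s, hs, ht, map_zero]
    have h9 := hι (by rw [h8, map_zero] :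
      ι (eM (LinearMap.lTensor E inc (LinearMap.rTensor _ Φ' s))) = ι 0)
    have h10 := eM.injective (by rw [h9, map_zero] :
      eM (LinearMap.lTensor E inc (LinearMap.rTensor _ Φ' s)) = eM 0)
    exact hincT (by rw [h10, map_zero])
  have h11 : Function.Bijective (LinearMap.rTensor ↥(LinearMap.ker hbar) Φ') := by
    apply rTensor_bijective 𝔦
    · exact hkill
    · exact phi_surjective hM hE0 hT0 ι π Φ hπ hleft hright
    · exact le_of_eq (ker_phiL him hmul hbij hM hE0 hT0 hE1 ι π Φ hι hπ hex hleft hright)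
  have h12 : s = 0 := h11.injective (by rw [h7, map_zero])
  rw [← hs, h12, map_zero]

include him hmul hbij hM hE0 hT0 hE1 hι hπ hex hleft hright in
/-- The induced equivalence `𝔽 ⧸ 𝔦𝔽 ≃ E`. -/
noncomputable def quotEquiv :
    letI := moduleF hbij hM hE0 hT0 ι Φ hleft
    (𝔽 ⧸ (𝔦 • (⊤ : Submodule A₁ 𝔽))) ≃ₗ[A₁] E :=
  letI := moduleF hbij hM hE0 hT0 ι Φ hleft
  (Submodule.quotEquivOfEq _ _
      (ker_phiL him hmul hbij hM hE0 hT0 hE1 ι π Φ hι hπ hex hleft hright).symm).trans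
    ((phiL hbij hM hE0 hT0 hE1 ι Φ hleft).quotKerEquivOfSurjective
      (phi_surjective hM hE0 hT0 ι π Φ hπ hleft hright))

end Main

end LiftFlatAux

open LiftFlatAux

/-- Three-ring deformation setup: `A₀` a commutative ring, `A₁` a commutative `A₀`-algebra
with ideals `𝔦 ⊆ 𝔪` satisfying `𝔪·𝔦 = 0` and such that `A₀ → A₁/𝔪` is an isomorphism;
`A = A₁/𝔦`, `𝔫 = 𝔪/𝔦`, `E` a flat `A`-module, `E₀ = E/𝔫E`.  Given a short exact sequence
of `A₀`-modules `0 → E ⊗_A 𝔪 →ι 𝔽 →π E₀ → 0` together with `Φ : 𝔽 → E` forming (with the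
natural surjection `E ⊗_A 𝔪 → E ⊗_A 𝔫` and the identity of `E₀`) a morphism of short
exact sequences to `0 → E ⊗_A 𝔫 → E → E₀ → 0`, the formula
`(a + m) • x = a·x + ι(Φ(x) ⊗ m)` (where every element of `A₁` is uniquely `a + m` with
`a` in the image of `A₀` and `m ∈ 𝔪`) defines an `A₁`-module structure on `𝔽`, the module
`𝔽` is flat over `A₁`, and `𝔽 ⊗_{A₁} A ≅ E` as `A`-modules. -/
theorem lift_of_extension_class_gives_flat_extension
    (A₀ A₁ : Type) [CommRing A₀] [CommRing A₁] [Algebra A₀ A₁]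
    (𝔦 𝔪 : Ideal A₁) (him : 𝔦 ≤ 𝔪) (hmul : 𝔪 * 𝔦 = ⊥)
    (hbij : Function.Bijective ((Ideal.Quotient.mk 𝔪).comp (algebraMap A₀ A₁)))
    (E : Type) [AddCommGroup E] [Module (A₁ ⧸ 𝔦) E] [Module.Flat (A₁ ⧸ 𝔦) E] :
    -- `𝔪` is naturally a module over `A = A₁/𝔦` since `𝔪·𝔦 = 0`
    haveI htor : Module.IsTorsionBySet A₁ (↥𝔪) (𝔦 : Set A₁) := fun x a => by
      have h : (x : A₁) * (a : A₁) ∈ 𝔪 * 𝔦 := Ideal.mul_mem_mul x.2 a.2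
      rw [hmul, Ideal.mem_bot] at h
      exact Subtype.ext (by simpa [mul_comm] using h)
    letI : Module (A₁ ⧸ 𝔦) ↥𝔪 := htor.module
    -- all modules are regarded as `A₀`-modules via the algebra maps
    letI : Module A₀ E := Module.compHom E (algebraMap A₀ (A₁ ⧸ 𝔦))
    letI : Module A₀ (E ⊗[A₁ ⧸ 𝔦] ↥𝔪) :=
      Module.compHom _ (algebraMap A₀ (A₁ ⧸ 𝔦))
    letI : Module A₀
        (E ⧸ (Ideal.map (Ideal.Quotient.mk 𝔦) 𝔪 • (⊤ : Submodule (A₁ ⧸ 𝔦) E))) :=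
      Module.compHom _ (algebraMap A₀ (A₁ ⧸ 𝔦))
    -- `E` as an `A₁`-module by restriction of scalars along `A₁ → A₁/𝔦`
    letI : Module A₁ E := Module.compHom E (Ideal.Quotient.mk 𝔦)
    ∀ (𝔽 : Type) (_ : AddCommGroup 𝔽),
      ∀ [Module A₀ 𝔽]
        (ι : (E ⊗[A₁ ⧸ 𝔦] ↥𝔪) →ₗ[A₀] 𝔽)
        (π : 𝔽 →ₗ[A₀]
          (E ⧸ (Ideal.map (Ideal.Quotient.mk 𝔦) 𝔪 • (⊤ : Submodule (A₁ ⧸ 𝔦) E))))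
        (Φ : 𝔽 →ₗ[A₀] E),
        Function.Injective ι → Function.Surjective π →
        LinearMap.range ι = LinearMap.ker π →
        -- left square: `Φ ∘ ι` is the natural surjection `E ⊗ 𝔪 → E ⊗ 𝔫`
        -- followed by `E ⊗ 𝔫 → E`, `x ⊗ m ↦ (m mod 𝔦) • x`
        (∀ (x : E) (m : ↥𝔪),
          Φ (ι (x ⊗ₜ[A₁ ⧸ 𝔦] m)) = (Ideal.Quotient.mk 𝔦 (m : A₁)) • x) →
        -- right square: `π` is `Φ` followed by the quotient map `E → E₀`
        (∀ x : 𝔽,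
          (Submodule.Quotient.mk (Φ x) :
            E ⧸ (Ideal.map (Ideal.Quotient.mk 𝔦) 𝔪 • (⊤ : Submodule (A₁ ⧸ 𝔦) E))) = π x) →
        ∃ inst : Module A₁ 𝔽,
          letI := inst
          (∀ (a₀ : A₀) (m : ↥𝔪) (x : 𝔽),
            (algebraMap A₀ A₁ a₀ + (m : A₁)) • x = a₀ • x + ι ((Φ x) ⊗ₜ[A₁ ⧸ 𝔦] m)) ∧
          Module.Flat A₁ 𝔽 ∧
          Nonempty ((𝔽 ⧸ (𝔦 • (⊤ : Submodule A₁ 𝔽))) ≃ₗ[A₁] E) := by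
  haveI htor : Module.IsTorsionBySet A₁ (↥𝔪) (𝔦 : Set A₁) := fun x a => by
    have h : (x : A₁) * (a : A₁) ∈ 𝔪 * 𝔦 := Ideal.mul_mem_mul x.2 a.2
    rw [hmul, Ideal.mem_bot] at h
    exact Subtype.ext (by simpa [mul_comm] using h)
  letI : Module (A₁ ⧸ 𝔦) ↥𝔪 := htor.module
  letI : Module A₀ E := Module.compHom E (algebraMap A₀ (A₁ ⧸ 𝔦))
  letI : Module A₀ (E ⊗[A₁ ⧸ 𝔦] ↥𝔪) := Module.compHom _ (algebraMap A₀ (A₁ ⧸ 𝔦))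
  letI : Module A₀
      (E ⧸ (Ideal.map (Ideal.Quotient.mk 𝔦) 𝔪 • (⊤ : Submodule (A₁ ⧸ 𝔦) E))) :=
    Module.compHom _ (algebraMap A₀ (A₁ ⧸ 𝔦))
  letI : Module A₁ E := Module.compHom E (Ideal.Quotient.mk 𝔦)
  intro 𝔽 instF1 instF2 ι π Φ hι hπ hex hleft hright
  have hM : ∀ (a : A₁) (m : ↥𝔪),
      ((Ideal.Quotient.mk 𝔦 a • m : ↥𝔪) : A₁) = a * (m : A₁) := fun a m => rfl
  have hE0 : ∀ (a₀ : A₀) (x : E), a₀ • x = algebraMap A₀ (A₁ ⧸ 𝔦) a₀ • x := fun a₀ x => rfl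
  have hT0 : ∀ (a₀ : A₀) (t : E ⊗[A₁ ⧸ 𝔦] ↥𝔪),
      a₀ • t = algebraMap A₀ (A₁ ⧸ 𝔦) a₀ • t := fun a₀ t => rfl
  have hE1 : ∀ (a : A₁) (x : E), a • x = Ideal.Quotient.mk 𝔦 a • x := fun a x => rfl
  exact ⟨moduleF hbij hM hE0 hT0 ι Φ hleft,
    smul_formula hbij hM hE0 hT0 ι Φ hleft,
    flatF him hmul hbij hM hE0 hT0 hE1 ι π Φ hι hπ hex hleft hright,
    ⟨quotEquiv him hmul hbij hM hE0 hT0 hE1 ι π Φ hι hπ hex hleft hright⟩⟩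
end

section
/- Let R be a commutative ring and 𝔦 ⊆ 𝔪 ⊆ R ideals satisfying 𝔪·𝔦 = 0. Let n be a finite index type and let B and C be n × n matrices over R such that every entry of B lies in 𝔪 and every entry of C lies in 𝔦. Then det(1 + B + C) = det(1 + B) + trace(C), where 1 denotes the identity matrix. -/
/-- If `𝔦 ⊆ 𝔪` are ideals of a commutative ring `R` with `𝔪 · 𝔦 = 0`, `B` is a square matrix
with entries in `𝔪` and `C` a square matrix with entries in `𝔦`, then
`det (1 + B + C) = det (1 + B) + trace C`. -/
theorem det_one_add_add_eq_det_add_trace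
    (R : Type) [CommRing R] (𝔦 𝔪 : Ideal R) (him : 𝔦 ≤ 𝔪) (hmul : 𝔪 * 𝔦 = ⊥)
    (n : Type) [Fintype n] [DecidableEq n]
    (B C : Matrix n n R) (hB : ∀ i j, B i j ∈ 𝔪) (hC : ∀ i j, C i j ∈ 𝔦) :
    (1 + B + C).det = (1 + B).det + C.trace := by
  classical
  have hmi : ∀ a b : R, a ∈ 𝔪 → b ∈ 𝔦 → a * b = 0 := by
    intro a b ha hb
    have h : a * b ∈ 𝔪 * 𝔦 := Ideal.mul_mem_mul ha hb
    rw [hmul] at h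
    simpa using h
  have hii : ∀ a b : R, a ∈ 𝔦 → b ∈ 𝔦 → a * b = 0 := fun a b ha hb =>
    hmi a b (him ha) hb
  -- kill lemma: c ∈ 𝔦 absorbs 𝔪-perturbations in products
  have hkill : ∀ (c : R), c ∈ 𝔦 → ∀ (s : Finset n) (x y : n → R),
      (∀ j, y j ∈ 𝔪) → c * ∏ j ∈ s, (x j + y j) = c * ∏ j ∈ s, x j := by
    intro c hc s x y hy
    induction s using Finset.induction with
    | empty => simp
    | insert a s' hj ih =>
      rw [Finset.prod_insert hj, Finset.prod_insert hj]
      have hcx : c * (x a + y a) = c * x a := by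
        rw [mul_add, mul_comm c (y a), hmi _ _ (hy a) hc, add_zero]
      calc c * ((x a + y a) * ∏ j ∈ s', (x j + y j))
          = (c * (x a + y a)) * ∏ j ∈ s', (x j + y j) := by ring
        _ = (c * x a) * ∏ j ∈ s', (x j + y j) := by rw [hcx]
        _ = x a * (c * ∏ j ∈ s', (x j + y j)) := by ring
        _ = x a * (c * ∏ j ∈ s', x j) := by rw [ih]
        _ = c * (x a * ∏ j ∈ s', x j) := by ring
  -- main expansion lemma
  have L : ∀ (s : Finset n) (d b v : n → R), (∀ j, b j ∈ 𝔪) → (∀ j, v j ∈ 𝔦) →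
      ∏ j ∈ s, (d j + b j + v j)
        = ∏ j ∈ s, (d j + b j) + ∑ j ∈ s, v j * ∏ k ∈ s.erase j, d k := by
    intro s d b v hb hv
    induction s using Finset.induction with
    | empty => simp
    | insert a s' ha ih =>
      rw [Finset.prod_insert ha, Finset.prod_insert ha, Finset.sum_insert ha]
      have e1 : v a * ∏ j ∈ s', (d j + b j) = v a * ∏ j ∈ s', d j :=
        hkill _ (hv a) s' d b hb
      have e2 : ∀ j ∈ s', (d a + b a + v a) * (v j * ∏ k ∈ s'.erase j, d k)
          = d a * (v j * ∏ k ∈ s'.erase j, d k) := by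
        intro j hj
        have hz1 : b a * v j = 0 := hmi _ _ (hb a) (hv j)
        have hz2 : v a * v j = 0 := hii _ _ (hv a) (hv j)
        have h1 : (d a + b a + v a) * (v j * ∏ k ∈ s'.erase j, d k)
            = d a * (v j * ∏ k ∈ s'.erase j, d k)
              + (b a * v j) * ∏ k ∈ s'.erase j, d k
              + (v a * v j) * ∏ k ∈ s'.erase j, d k := by ring
        rw [h1, hz1, hz2]; ring
      have e4 : (insert a s').erase a = s' := Finset.erase_insert ha
      have e6 : ∑ j ∈ s', v j * ∏ k ∈ (insert a s').erase j, d k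
          = ∑ j ∈ s', d a * (v j * ∏ k ∈ s'.erase j, d k) := by
        refine Finset.sum_congr rfl (fun j hj => ?_)
        rw [Finset.erase_insert_of_ne (by rintro rfl; exact ha hj),
          Finset.prod_insert (fun h => ha (Finset.mem_of_mem_erase h))]
        ring
      calc (d a + b a + v a) * ∏ j ∈ s', (d j + b j + v j)
          = (d a + b a + v a) * (∏ j ∈ s', (d j + b j)
              + ∑ j ∈ s', v j * ∏ k ∈ s'.erase j, d k) := by rw [ih]
        _ = (d a + b a) * ∏ j ∈ s', (d j + b j) + v a * ∏ j ∈ s', (d j + b j)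
              + ∑ j ∈ s', (d a + b a + v a) * (v j * ∏ k ∈ s'.erase j, d k) := by
            rw [mul_add, Finset.mul_sum]; ring
        _ = (d a + b a) * ∏ j ∈ s', (d j + b j) + v a * ∏ j ∈ s', d j
              + ∑ j ∈ s', d a * (v j * ∏ k ∈ s'.erase j, d k) := by
            rw [e1, Finset.sum_congr rfl e2]
        _ = (d a + b a) * ∏ j ∈ s', (d j + b j)
              + (v a * ∏ k ∈ (insert a s').erase a, d k
                + ∑ j ∈ s', v j * ∏ k ∈ (insert a s').erase j, d k) := by
            rw [e4, e6]; ring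
  -- apply L to each permutation term
  have key : ∀ σ : Equiv.Perm n,
      (∏ i, (1 + B + C) (σ i) i)
        = (∏ i, (1 + B) (σ i) i)
          + ∑ i, C (σ i) i * ∏ j ∈ Finset.univ.erase i, (1 : Matrix n n R) (σ j) j := by
    intro σ
    have := L Finset.univ (fun j => (1 : Matrix n n R) (σ j) j)
      (fun j => B (σ j) j) (fun j => C (σ j) j)
      (fun j => hB _ _) (fun j => hC _ _)
    simpa [Matrix.add_apply] using this
  rw [Matrix.det_apply, Matrix.det_apply]
  simp_rw [key, smul_add]
  rw [Finset.sum_add_distrib]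
  congr 1
  rw [Finset.sum_eq_single (1 : Equiv.Perm n)]
  · simp [Matrix.trace, Matrix.diag, Matrix.one_apply]
  · intro σ _ hσ
    have hzero : ∀ i : n, C (σ i) i * ∏ j ∈ Finset.univ.erase i, (1 : Matrix n n R) (σ j) j = 0 := by
      intro i
      have hex : ∃ j, j ≠ i ∧ σ j ≠ j := by
        by_contra h
        push_neg at h
        apply hσ
        ext j
        simp only [Equiv.Perm.coe_one, id_eq]
        by_cases hji : j = i
        · subst hji
          by_contra hji'
          have h1 : σ (σ j) = σ j := h (σ j) hji'
          exact hji' (σ.injective h1)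
        · exact h j hji
      obtain ⟨j, hji, hj⟩ := hex
      have hp : ∏ k ∈ Finset.univ.erase i, (1 : Matrix n n R) (σ k) k = 0 :=
        Finset.prod_eq_zero (Finset.mem_erase.mpr ⟨hji, Finset.mem_univ j⟩)
          (Matrix.one_apply_ne hj)
      rw [hp, mul_zero]
    simp [hzero]
  · intro h; exact absurd (Finset.mem_univ _) h
end
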